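/- arXiv:0906.0734 — 3 statements merged into one kernel-verified Lean document; each statement's English description precedes it below -/
import Mathlib

section
/- Let p be a prime, let (n_k) be a strictly increasing sequence of nonnegative integers with n_{k+1} − n_k → ∞, and for each k let u_k be the character of the group Δ_p of p-adic integers given by u_k(ω) = exp(2πi (a_0 + a_1 p + … + a_{n_k} p^{n_k}) / p^{n_k+1}) for ω ∈ Δ_p with p-adic digit expansion ω = Σ_n a_n p^n, 0 ≤ a_n < p. For ω ∈ Δ_p and k > 1 define d_k = n_k if 0 < a_{n_k} < p − 1, and otherwise d_k = min{ j : either a_s = 0 for every j < s ≤ n_k, or a_s = p − 1 for every j < s ≤ n_k }; and set m_k = max(d_k, n_{k−1}). Then u_k(ω) → 1 as k → ∞ if and only if n_k − m_k → ∞. -/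
open Filter Topology

/-- The `i`-th digit `a_i ∈ {0, …, p-1}` in the canonical expansion
`ω = Σ_i a_i p^i` of a `p`-adic integer `ω`, extracted from the approximations
`ω.appr m ≡ ω [mod p^m]`, `0 ≤ ω.appr m < p^m`. -/
noncomputable def padicDigit (p : ℕ) [Fact p.Prime] (ω : ℤ_[p]) (i : ℕ) : ℕ :=
  (ω.appr (i + 1) - ω.appr i) / p ^ i

/-- The value at `ω ∈ Δ_p` of the character of `Δ_p` given by the element `1/p^m` of the
Prüfer group `ℤ(p^∞)`: namely `exp(2πi (a_0 + a_1 p + ⋯ + a_{m-1} p^{m-1}) / p^m)`,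
where `a_0 + a_1 p + ⋯ + a_{m-1} p^{m-1} = ω.appr m`. -/
noncomputable def padicChar (p : ℕ) [Fact p.Prime] (m : ℕ) (ω : ℤ_[p]) : ℂ :=
  Complex.exp (2 * Real.pi * Complex.I * (ω.appr m : ℂ) / (p : ℂ) ^ m)

/-- The index `d_k` associated to `ω ∈ Δ_p` and the index `n_k`: it is `n_k` itself if
`0 < a_{n_k} < p - 1`, and otherwise the least `j` such that the digits `a_s` for
`j < s ≤ n_k` are either all `0` or all `p - 1`. -/
noncomputable def dIdx (p : ℕ) [Fact p.Prime] (ω : ℤ_[p]) (nk : ℕ) : ℕ :=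
  if 0 < padicDigit p ω nk ∧ padicDigit p ω nk < p - 1 then nk
  else sInf {j : ℕ | (∀ s, j < s → s ≤ nk → padicDigit p ω s = 0) ∨
                     (∀ s, j < s → s ≤ nk → padicDigit p ω s = p - 1)}

/-- `m_k = max (d_k, n_{k-1})`. -/
noncomputable def mIdx (p : ℕ) [Fact p.Prime] (ω : ℤ_[p]) (n : ℕ → ℕ) (k : ℕ) : ℕ :=
  max (dIdx p ω (n k)) (n (k - 1))

open Real

/-!
Write `x_k = (a_0 + a_1 p + ⋯ + a_{n_k} p^{n_k}) / p^{n_k+1} ∈ [0, 1)`, so that `u_k(ω) → 1` iff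
the distance `‖x_k‖` from `x_k` to the nearest integer tends to `0`. The digits `a_s` with
`d_k < s ≤ n_k` are all `0` or all `p - 1`, so `x_k` lies within `p^{d_k - n_k}` of `0` or `1`;
by minimality of `d_k` the digit `a_{d_k}` breaks that run, which keeps `x_k` at distance at least
`p^{d_k - n_k - 1}` from both unless `d_k = 0`. Hence `‖x_k‖ → 0` iff `n_k - d_k → ∞`, and as
`n_k - n_{k-1} → ∞`, this is equivalent to `n_k - m_k = min (n_k - d_k) (n_k - n_{k-1}) → ∞`.
-/

theorem pow_succ_eq_sub_one_mul_add {p : ℕ} (hp : 1 ≤ p) (k : ℕ) :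
    p ^ (k + 1) = (p - 1) * p ^ k + p ^ k := by
  rw [← Nat.succ_mul, Nat.succ_eq_add_one, Nat.sub_add_cancel hp, pow_succ']

theorem pow_succ_add_pow_le_pow_succ {p D N : ℕ} (hp : 2 ≤ p) (hDN : D < N) :
    p ^ (D + 1) + p ^ D ≤ p ^ (N + 1) :=
  calc p ^ (D + 1) + p ^ D ≤ 2 * p ^ (D + 1) := by
        rw [two_mul]; gcongr; exacts [by omega, D.le_succ]
    _ ≤ p ^ (D + 1 + 1) := by rw [pow_succ _ (D + 1), mul_comm]; gcongr
    _ ≤ p ^ (N + 1) := Nat.pow_le_pow_right (by omega) (by omega)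

section Digits

variable {p : ℕ} [Fact p.Prime] (ω : ℤ_[p])

theorem appr_succ_eq_add_padicDigit (i : ℕ) :
    ω.appr (i + 1) = ω.appr i + padicDigit p ω i * p ^ i := by
  have hdvd : p ^ i ∣ ω.appr (i + 1) - ω.appr i := ω.dvd_appr_sub_appr i (i + 1) i.le_succ
  have hle : ω.appr i ≤ ω.appr (i + 1) := ω.appr_mono i.le_succ
  have := Nat.div_mul_cancel hdvd
  rw [padicDigit]
  omega

theorem padicDigit_lt (i : ℕ) : padicDigit p ω i < p := by
  have hlt : ω.appr (i + 1) < p * p ^ i := pow_succ' p i ▸ ω.appr_lt (i + 1)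
  rw [appr_succ_eq_add_padicDigit] at hlt
  exact Nat.lt_of_mul_lt_mul_right (a := p ^ i) (by omega)

theorem pow_le_appr_succ_of_padicDigit_ne_zero {D : ℕ} (h : padicDigit p ω D ≠ 0) :
    p ^ D ≤ ω.appr (D + 1) := by
  rw [appr_succ_eq_add_padicDigit]
  exact le_add_left (Nat.le_mul_of_pos_left _ (Nat.pos_of_ne_zero h))

theorem appr_succ_add_pow_le_of_padicDigit_ne {D : ℕ} (h : padicDigit p ω D ≠ p - 1) :
    ω.appr (D + 1) + p ^ D ≤ p ^ (D + 1) := by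
  have hdigit : padicDigit p ω D + 1 ≤ p - 1 := by have := padicDigit_lt ω D; omega
  have hmul := Nat.mul_le_mul_right (p ^ D) hdigit
  rw [Nat.succ_mul] at hmul
  have := ω.appr_lt D
  rw [appr_succ_eq_add_padicDigit, pow_succ_eq_sub_one_mul_add (Fact.out : p.Prime).one_le]
  omega

variable (p) in
def DigitRun (c j N : ℕ) : Prop :=
  ∀ s, j < s → s ≤ N → padicDigit p ω s = c

variable {ω}

theorem digitRun_self (c N : ℕ) : DigitRun p ω c N N :=
  fun _ hs hsN => absurd hsN (by omega)

theorem DigitRun.sub_one {c D N : ℕ} (h : DigitRun p ω c D N) (hD : padicDigit p ω D = c) :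
    DigitRun p ω c (D - 1) N := by
  intro s hs hsN
  rcases eq_or_lt_of_le (Nat.le_of_pred_lt hs) with rfl | hDs
  exacts [hD, h s hDs hsN]

theorem DigitRun.appr_succ_eq {j N : ℕ} (h : DigitRun p ω 0 j N) (hjN : j ≤ N) :
    ω.appr (N + 1) = ω.appr (j + 1) := by
  induction N, hjN using Nat.le_induction with
  | base => rfl
  | succ N hjN ih =>
    rw [appr_succ_eq_add_padicDigit, h (N + 1) (by omega) le_rfl, zero_mul, add_zero]
    exact ih fun s hs hsN => h s hs (by omega)

theorem DigitRun.appr_succ_add_pow_eq {j N : ℕ} (h : DigitRun p ω (p - 1) j N) (hjN : j ≤ N) :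
    ω.appr (N + 1) + p ^ (j + 1) = ω.appr (j + 1) + p ^ (N + 1) := by
  induction N, hjN using Nat.le_induction with
  | base => rfl
  | succ N hjN ih =>
    have := ih fun s hs hsN => h s hs (by omega)
    rw [appr_succ_eq_add_padicDigit, h (N + 1) (by omega) le_rfl,
      pow_succ_eq_sub_one_mul_add (Fact.out : p.Prime).one_le (N + 1)]
    omega

variable (p ω) in
def tailRunStarts (N : ℕ) : Set ℕ :=
  {j | DigitRun p ω 0 j N ∨ DigitRun p ω (p - 1) j N}

theorem self_mem_tailRunStarts (N : ℕ) : N ∈ tailRunStarts p ω N :=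
  .inl (digitRun_self 0 N)

theorem sInf_tailRunStarts_mem (N : ℕ) : sInf (tailRunStarts p ω N) ∈ tailRunStarts p ω N :=
  Nat.sInf_mem ⟨N, self_mem_tailRunStarts N⟩

theorem sInf_tailRunStarts_le (N : ℕ) : sInf (tailRunStarts p ω N) ≤ N :=
  Nat.sInf_le (self_mem_tailRunStarts N)

theorem dIdx_eq_sInf {N : ℕ} (h : ¬(0 < padicDigit p ω N ∧ padicDigit p ω N < p - 1)) :
    dIdx p ω N = sInf (tailRunStarts p ω N) :=
  if_neg h

variable (ω) in
theorem dIdx_le (N : ℕ) : dIdx p ω N ≤ N := by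
  by_cases hmid : 0 < padicDigit p ω N ∧ padicDigit p ω N < p - 1
  · rw [dIdx, if_pos hmid]
  · rw [dIdx_eq_sInf hmid]
    exact sInf_tailRunStarts_le N

end Digits

section Distance

variable {p : ℕ} [Fact p.Prime] (ω : ℤ_[p])

variable (p) in
noncomputable def apprDist (m : ℕ) : ℕ :=
  min (ω.appr m) (p ^ m - ω.appr m)

theorem le_apprDist_iff {k m : ℕ} :
    k ≤ apprDist p ω m ↔ k ≤ ω.appr m ∧ ω.appr m + k ≤ p ^ m := by
  have := ω.appr_lt m
  rw [apprDist, le_min_iff]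
  omega

theorem apprDist_le_iff {k m : ℕ} :
    apprDist p ω m ≤ k ↔ ω.appr m ≤ k ∨ p ^ m ≤ ω.appr m + k := by
  rw [apprDist, min_le_iff]
  omega

variable {ω}

theorem DigitRun.pow_le_apprDist_of_zeros {D N : ℕ} (h : DigitRun p ω 0 D N) (hDN : D < N)
    (hD : padicDigit p ω D ≠ 0) : p ^ D ≤ apprDist p ω (N + 1) := by
  have hlow := pow_le_appr_succ_of_padicDigit_ne_zero ω hD
  have hlt := ω.appr_lt (D + 1)
  have hpow := pow_succ_add_pow_le_pow_succ (Fact.out : p.Prime).two_le hDN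
  rw [le_apprDist_iff, h.appr_succ_eq hDN.le]
  omega

theorem DigitRun.pow_le_apprDist_of_maxDigits {D N : ℕ} (h : DigitRun p ω (p - 1) D N)
    (hDN : D < N) (hD : padicDigit p ω D ≠ p - 1) : p ^ D ≤ apprDist p ω (N + 1) := by
  have hrun := h.appr_succ_add_pow_eq hDN.le
  have hup := appr_succ_add_pow_le_of_padicDigit_ne ω hD
  have hpow := pow_succ_add_pow_le_pow_succ (Fact.out : p.Prime).two_le hDN
  rw [le_apprDist_iff]
  omega

variable (ω)

theorem apprDist_le_pow_dIdx (N : ℕ) : apprDist p ω (N + 1) ≤ p ^ (dIdx p ω N + 1) := by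
  rw [apprDist_le_iff]
  by_cases hmid : 0 < padicDigit p ω N ∧ padicDigit p ω N < p - 1
  · rw [dIdx, if_pos hmid]
    exact .inl (ω.appr_lt _).le
  rw [dIdx_eq_sInf hmid]
  have hDN := sInf_tailRunStarts_le (ω := ω) N
  rcases sInf_tailRunStarts_mem (ω := ω) N with hzero | htop
  · rw [hzero.appr_succ_eq hDN]
    exact .inl (ω.appr_lt _).le
  · have := htop.appr_succ_add_pow_eq hDN
    omega

theorem pow_dIdx_le_apprDist {N : ℕ} (hd : dIdx p ω N ≠ 0) :
    p ^ dIdx p ω N ≤ apprDist p ω (N + 1) := by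
  by_cases hmid : 0 < padicDigit p ω N ∧ padicDigit p ω N < p - 1
  · rw [dIdx, if_pos hmid, le_apprDist_iff]
    exact ⟨pow_le_appr_succ_of_padicDigit_ne_zero ω (by omega),
      appr_succ_add_pow_le_of_padicDigit_ne ω (by omega)⟩
  rw [dIdx_eq_sInf hmid] at hd ⊢
  set D := sInf (tailRunStarts p ω N)
  have hDN : D < N := by
    have hN : padicDigit p ω N = 0 ∨ padicDigit p ω N = p - 1 := by
      have := padicDigit_lt ω N
      omega
    have hpred : N - 1 ∈ tailRunStarts p ω N :=
      hN.imp (fun h => (digitRun_self 0 N).sub_one h) (fun h => (digitRun_self _ N).sub_one h)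
    have := Nat.sInf_le hpred
    omega
  have hpred : D - 1 ∉ tailRunStarts p ω N := Nat.notMem_of_lt_sInf (by omega)
  rcases sInf_tailRunStarts_mem (ω := ω) N with hzero | htop
  · exact hzero.pow_le_apprDist_of_zeros hDN fun h => hpred (.inl (hzero.sub_one h))
  · exact htop.pow_le_apprDist_of_maxDigits hDN fun h => hpred (.inr (htop.sub_one h))

end Distance

theorem tendsto_exp_two_pi_mul_I_nhds_one_iff {ι : Type*} {l : Filter ι} (x : ι → ℝ) :
    Tendsto (fun i => Complex.exp (2 * π * Complex.I * x i)) l (𝓝 1) ↔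
      Tendsto (fun i => ‖(x i : UnitAddCircle)‖) l (𝓝 0) := by
  let e := AddCircle.homeomorphCircle (one_ne_zero (α := ℝ))
  have hexp (i : ι) : Complex.exp (2 * π * Complex.I * x i) = e (x i) := by
    rw [AddCircle.homeomorphCircle_apply, AddCircle.toCircle_apply_mk, Circle.coe_exp]
    push_cast
    ring_nf
  have hcoe : Tendsto (fun i => e (x i)) l (𝓝 1) ↔
      Tendsto (fun i => (e (x i) : ℂ)) l (𝓝 ((1 : Circle) : ℂ)) :=
    IsInducing.subtypeVal.tendsto_nhds_iff
  have he0 : e 0 = 1 := by simp [e, AddCircle.homeomorphCircle_apply]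
  rw [← tendsto_zero_iff_norm_tendsto_zero, e.isEmbedding.tendsto_nhds_iff, he0]
  simp only [hexp, Circle.coe_one] at hcoe ⊢
  exact hcoe.symm

theorem tendsto_inv_pow_nhds_zero_iff {ι : Type*} {l : Filter ι} {b : ℝ} (hb : 1 < b)
    {e : ι → ℕ} : Tendsto (fun i => (b ^ e i)⁻¹) l (𝓝 0) ↔ Tendsto e l atTop := by
  refine ⟨fun h => tendsto_atTop.2 fun M => ?_, fun h =>
    tendsto_inv_atTop_zero.comp ((tendsto_pow_atTop_atTop_of_one_lt hb).comp h)⟩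
  filter_upwards [h.eventually (gt_mem_nhds (inv_pos.2 (pow_pos (by linarith) M)))] with i hi
  rw [inv_lt_inv₀ (by positivity) (by positivity), pow_lt_pow_iff_right₀ hb] at hi
  exact hi.le

theorem tendsto_min_atTop_iff_left {ι α : Type*} [LinearOrder α] {l : Filter ι} {f g : ι → α}
    (hg : Tendsto g l atTop) :
    Tendsto (fun i => min (f i) (g i)) l atTop ↔ Tendsto f l atTop := by
  refine ⟨tendsto_atTop_mono fun _ => min_le_left _ _, fun hf => tendsto_atTop.2 fun b => ?_⟩
  filter_upwards [tendsto_atTop.1 hf b, tendsto_atTop.1 hg b] with i hfi hgi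
  exact le_min hfi hgi

theorem inv_pow_sub_eq_pow_succ_div {G₀ : Type*} [CommGroupWithZero G₀] {x : G₀} (hx : x ≠ 0)
    {d N : ℕ} (hdN : d ≤ N) :
    (x ^ (N - d))⁻¹ = x ^ (d + 1) / x ^ (N + 1) := by
  rw [show N - d = (N + 1) - (d + 1) by omega, pow_sub₀ _ hx (by omega), mul_inv, inv_inv,
    div_eq_mul_inv, mul_comm]

section Character

variable {p : ℕ} [Fact p.Prime] (ω : ℤ_[p])

theorem norm_appr_div_pow_eq_apprDist_div (m : ℕ) :
    ‖(((ω.appr m : ℝ) / (p : ℝ) ^ m : ℝ) : UnitAddCircle)‖ = apprDist p ω m / (p : ℝ) ^ m := by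
  have := abs_sub_round_div_natCast_eq (α := ℝ) (m := ω.appr m) (n := p ^ m)
  rw [Nat.mod_eq_of_lt (ω.appr_lt m)] at this
  push_cast at this
  rw [UnitAddCircle.norm_eq, this, apprDist, Nat.cast_min]

theorem tendsto_padicChar_nhds_one_iff {ι : Type*} {l : Filter ι} (m : ι → ℕ) :
    Tendsto (fun i => padicChar p (m i) ω) l (𝓝 1) ↔
      Tendsto (fun i => (apprDist p ω (m i) : ℝ) / (p : ℝ) ^ m i) l (𝓝 0) := by
  have hchar (i : ι) : padicChar p (m i) ω =
      Complex.exp (2 * π * Complex.I * ((ω.appr (m i) : ℝ) / (p : ℝ) ^ m i : ℝ)) := by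
    rw [padicChar]
    push_cast
    ring_nf
  simp_rw [hchar, tendsto_exp_two_pi_mul_I_nhds_one_iff, norm_appr_div_pow_eq_apprDist_div]

theorem apprDist_div_le_inv_pow (N : ℕ) :
    (apprDist p ω (N + 1) : ℝ) / (p : ℝ) ^ (N + 1) ≤ ((p : ℝ) ^ (N - dIdx p ω N))⁻¹ := by
  rw [inv_pow_sub_eq_pow_succ_div (by simp [(Fact.out : p.Prime).ne_zero]) (dIdx_le ω N),
    div_le_div_iff_of_pos_right (by simp [(Fact.out : p.Prime).pos])]
  exact_mod_cast apprDist_le_pow_dIdx ω N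

theorem inv_pow_le_apprDist_div (N : ℕ) :
    ((p : ℝ) ^ (N - dIdx p ω N))⁻¹ ≤
      p * ((apprDist p ω (N + 1) : ℝ) / (p : ℝ) ^ (N + 1)) + ((p : ℝ) ^ N)⁻¹ := by
  by_cases hd : dIdx p ω N = 0
  · rw [hd, Nat.sub_zero]
    exact le_add_of_nonneg_left (by positivity)
  rw [inv_pow_sub_eq_pow_succ_div (by simp [(Fact.out : p.Prime).ne_zero]) (dIdx_le ω N),
    pow_succ', mul_div_assoc]
  refine le_add_of_le_of_nonneg ?_ (by positivity)
  gcongr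
  exact_mod_cast pow_dIdx_le_apprDist ω hd

theorem tendsto_apprDist_div_nhds_zero_iff {ι : Type*} {l : Filter ι} {N : ι → ℕ}
    (hN : Tendsto N l atTop) :
    Tendsto (fun i => (apprDist p ω (N i + 1) : ℝ) / (p : ℝ) ^ (N i + 1)) l (𝓝 0) ↔
      Tendsto (fun i => N i - dIdx p ω (N i)) l atTop := by
  have hp : (1 : ℝ) < p := by exact_mod_cast (Fact.out : p.Prime).one_lt
  rw [← tendsto_inv_pow_nhds_zero_iff hp]
  refine ⟨fun h => ?_, fun h => ?_⟩
  · have hbound : Tendsto (fun i => p * ((apprDist p ω (N i + 1) : ℝ) / (p : ℝ) ^ (N i + 1)) +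
        ((p : ℝ) ^ N i)⁻¹) l (𝓝 0) := by
      simpa using (h.const_mul (p : ℝ)).add ((tendsto_inv_pow_nhds_zero_iff hp).2 hN)
    exact squeeze_zero (fun _ => by positivity) (fun i => inv_pow_le_apprDist_div ω (N i)) hbound
  · exact squeeze_zero (fun _ => by positivity) (fun i => apprDist_div_le_inv_pow ω (N i)) h

end Character

theorem padicChar_tendsto_one_iff_general
    (p : ℕ) [Fact p.Prime] (n : ℕ → ℕ)
    (hdiff : Tendsto (fun k => n (k + 1) - n k) atTop atTop) (ω : ℤ_[p]) :
    Tendsto (fun k => padicChar p (n k + 1) ω) atTop (𝓝 1)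
      ↔ Tendsto (fun k => n k - mIdx p ω n k) atTop atTop := by
  have hgap : Tendsto (fun k => n k - n (k - 1)) atTop atTop :=
    (tendsto_add_atTop_iff_nat 1).1 (by simpa using hdiff)
  have hn : Tendsto n atTop atTop := tendsto_atTop_mono (fun k => Nat.sub_le _ _) hgap
  have hmin (k : ℕ) : n k - mIdx p ω n k = min (n k - dIdx p ω (n k)) (n k - n (k - 1)) := by
    rw [mIdx]
    omega
  simp_rw [tendsto_padicChar_nhds_one_iff ω (fun k => n k + 1), hmin,
    tendsto_min_atTop_iff_left hgap]
  exact tendsto_apprDist_div_nhds_zero_iff ω hn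

/-- Let `p` be a prime, `(n_k)` a strictly increasing sequence of nonnegative integers with
`n_{k+1} - n_k → ∞`, and let `u_k` be the character of `Δ_p` given by
`u_k(ω) = exp(2πi (a_0 + a_1 p + ⋯ + a_{n_k} p^{n_k}) / p^{n_k + 1})`.
Then `u_k(ω) → 1` if and only if `n_k - m_k → ∞`. -/
theorem padicChar_tendsto_one_iff
    (p : ℕ) [Fact p.Prime] (n : ℕ → ℕ) (hmono : StrictMono n)
    (hdiff : Tendsto (fun k => n (k + 1) - n k) atTop atTop) (ω : ℤ_[p]) :
    Tendsto (fun k => padicChar p (n k + 1) ω) atTop (𝓝 1)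
      ↔ Tendsto (fun k => n k - mIdx p ω n k) atTop atTop :=
  padicChar_tendsto_one_iff_general p n hdiff ω
end

section
/- Let p be a prime, (n_k) a strictly increasing sequence of nonnegative integers with n_{k+1} − n_k → ∞, u_k the character of Δ_p given by u_k(ω) = exp(2πi (a_0 + a_1 p + … + a_{n_k} p^{n_k}) / p^{n_k+1}), and let G_u = s_u(Δ_p) = {ω ∈ Δ_p : u_k(ω) → 1} be equipped with the metric ρ(x, y) = d(x, y) + sup_k |u_k(x) − u_k(y)|, where d is the standard metric of Δ_p. Then the cyclic subgroup generated by ω_0 = 1 (the p-adic integer with digits (1, 0, 0, …)) is dense in (G_u, ρ); in particular the topological group G_u is monothetic. -/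
open Filter Topology

/-- The standard metric of `Δ_p`: `d(x, y) = 2⁻ⁿ` where `n` is the first index at which the
digits of `x` and `y` differ (and `d(x, x) = 0`). -/
noncomputable def padicStdDist (p : ℕ) [Fact p.Prime] (x y : ℤ_[p]) : ℝ :=
  open scoped Classical in
  if x = y then 0 else (2 : ℝ)⁻¹ ^ sInf {i : ℕ | padicDigit p x i ≠ padicDigit p y i}

/-- The subgroup `s_u(Δ_p) = {ω : u_k(ω) → 1}` determined by the sequence of characters
`u_k = 1/p^{n_k + 1}`. -/
def sU (p : ℕ) [Fact p.Prime] (n : ℕ → ℕ) : Set ℤ_[p] :=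
  {ω | Tendsto (fun k => padicChar p (n k + 1) ω) atTop (𝓝 1)}

/-- The Polish group metric `ρ(x, y) = d(x, y) + sup_k |u_k(x) − u_k(y)|` on `s_u(Δ_p)`. -/
noncomputable def padicRho (p : ℕ) [Fact p.Prime] (n : ℕ → ℕ) (x y : ℤ_[p]) : ℝ :=
  padicStdDist p x y +
    ⨆ k : ℕ, ‖padicChar p (n k + 1) x - padicChar p (n k + 1) y‖

/-!
On the integers the character `u_k` is `q ↦ exp(2πi q / p^(n_k+1))`, so a small integer `q` has
`u_k(q)` close to `1` for every `k` beyond a given index. Given `ω ∈ s_u(Δ_p)` and `ε`, pick `K`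
with `u_k(ω)` close to `1` for `k ≥ K` and set `M = n_K + 1`. Among the integers congruent to `ω`
modulo `p^M` there is one with `|q| ≤ p^M / 2`; by Jordan's inequality `|q| / p^M` is then at most
a quarter of `|u_K(ω) − 1|`. This `q` agrees with `ω` in the first `M` digits, which makes
`d(ω, q) ≤ 2^(-M)` and `u_k(ω) = u_k(q)` for `n_k < M`, while for `n_k ≥ M` we have `k > K`, so
`u_k(ω)` is close to `1`, and `|u_k(q) − 1| ≤ 2π|q| / p^(M+1) ≤ |u_K(ω) − 1|`.
-/

open Complex PadicInt

lemma norm_exp_two_pi_I_mul_sub_one_le (t : ℝ) :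
    ‖exp (2 * Real.pi * I * t) - 1‖ ≤ 2 * Real.pi * |t| := by
  rw [show (2 * Real.pi * I * t : ℂ) = I * ↑(2 * Real.pi * t) by push_cast; ring]
  refine Real.norm_exp_I_mul_ofReal_sub_one_le.trans_eq ?_
  rw [Real.norm_eq_abs, abs_mul, abs_of_pos Real.two_pi_pos]

lemma four_mul_abs_le_norm_exp_two_pi_I_mul_sub_one {t : ℝ} (ht : |t| ≤ 1 / 2) :
    4 * |t| ≤ ‖exp (2 * Real.pi * I * t) - 1‖ := by
  have hπt : |Real.pi * t| = Real.pi * |t| := by rw [abs_mul, abs_of_pos Real.pi_pos]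
  calc 4 * |t| = 2 * (2 / Real.pi * |Real.pi * t|) := by
        rw [hπt]; field_simp; ring
    _ ≤ 2 * |Real.sin (Real.pi * t)| := by
        gcongr
        exact Real.mul_abs_le_abs_sin (by rw [hπt]; nlinarith [Real.pi_pos])
    _ = ‖exp (2 * Real.pi * I * t) - 1‖ := by
        rw [show (2 * Real.pi * I * t : ℂ) = I * ↑(2 * Real.pi * t) by push_cast; ring,
          norm_exp_I_mul_ofReal_sub_one, norm_mul, Real.norm_two, Real.norm_eq_abs]
        ring_nf

namespace PadicInt

variable {p : ℕ} [Fact p.Prime]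

lemma appr_eq_appr_iff {x y : ℤ_[p]} {n : ℕ} :
    x.appr n = y.appr n ↔ toZModPow n x = toZModPow n y := by
  change _ ↔ (x.appr n : ZMod (p ^ n)) = y.appr n
  rw [ZMod.natCast_eq_natCast_iff', Nat.mod_eq_of_lt (appr_lt _ _), Nat.mod_eq_of_lt (appr_lt _ _)]

lemma toZModPow_eq_of_le {x y : ℤ_[p]} {M j : ℕ} (h : toZModPow M x = toZModPow M y)
    (hj : j ≤ M) : toZModPow j x = toZModPow j y := by
  rw [← cast_toZModPow j M hj, h, cast_toZModPow _ _ hj]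

lemma appr_succ (x : ℤ_[p]) (i : ℕ) : x.appr (i + 1) = x.appr i + padicDigit p x i * p ^ i := by
  rw [padicDigit, Nat.div_mul_cancel (dvd_appr_sub_appr x i (i + 1) i.le_succ),
    Nat.add_sub_cancel' (x.appr_mono i.le_succ)]

lemma ext_padicDigit {x y : ℤ_[p]} (h : ∀ i, padicDigit p x i = padicDigit p y i) : x = y := by
  have happr : ∀ j, x.appr j = y.appr j := by
    intro j
    induction j with
    | zero => rfl
    | succ i ih => rw [appr_succ, appr_succ, ih, h i]
  exact ext_of_toZModPow.mp fun j => appr_eq_appr_iff.mp (happr j)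

lemma padicDigit_eq_of_toZModPow_eq {x y : ℤ_[p]} {M i : ℕ}
    (h : toZModPow M x = toZModPow M y) (hi : i < M) : padicDigit p x i = padicDigit p y i := by
  rw [padicDigit, appr_eq_appr_iff.mpr (toZModPow_eq_of_le h hi),
    appr_eq_appr_iff.mpr (toZModPow_eq_of_le h hi.le), padicDigit]

end PadicInt

section Characters

variable {p : ℕ} [Fact p.Prime]

lemma padicStdDist_le_of_toZModPow_eq {x y : ℤ_[p]} {M : ℕ}
    (h : toZModPow M x = toZModPow M y) : padicStdDist p x y ≤ 2⁻¹ ^ M := by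
  unfold padicStdDist
  split_ifs with hxy
  · positivity
  obtain ⟨i, hi⟩ : ∃ i, padicDigit p x i ≠ padicDigit p y i := by
    by_contra! hall
    exact hxy (ext_padicDigit hall)
  refine pow_le_pow_of_le_one (by norm_num) (by norm_num) (le_csInf ⟨i, hi⟩ fun j hj => ?_)
  by_contra! hjM
  exact hj (padicDigit_eq_of_toZModPow_eq h hjM)

lemma padicChar_eq_of_toZModPow_eq {x y : ℤ_[p]} {m : ℕ} (h : toZModPow m x = toZModPow m y) :
    padicChar p m x = padicChar p m y := by
  rw [padicChar, appr_eq_appr_iff.mpr h, padicChar]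

lemma padicChar_intCast (m : ℕ) (q : ℤ) :
    padicChar p m q = exp (2 * Real.pi * I * ((q / p ^ m : ℝ) : ℂ)) := by
  obtain ⟨t, ht⟩ : ((p ^ m : ℕ) : ℤ) ∣ q - (q : ℤ_[p]).appr m :=
    (ZMod.intCast_eq_intCast_iff_dvd_sub _ _ _).mp (by exact_mod_cast map_intCast (toZModPow m) q)
  have hp : (p : ℂ) ^ m ≠ 0 := pow_ne_zero _ (Nat.cast_ne_zero.mpr (Fact.out : p.Prime).ne_zero)
  have happr : ((q : ℤ_[p]).appr m : ℂ) = q - (p : ℂ) ^ m * t := by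
    rw [eq_sub_iff_add_eq, ← eq_sub_iff_add_eq']
    exact_mod_cast ht.symm
  rw [padicChar, exp_eq_exp_iff_exists_int]
  refine ⟨-t, ?_⟩
  rw [happr]
  push_cast
  field_simp
  ring

lemma exists_intCast_toZModPow_eq_two_mul_abs_le (ω : ℤ_[p]) (M : ℕ) :
    ∃ q : ℤ, toZModPow M (q : ℤ_[p]) = toZModPow M ω ∧ 2 * |(q : ℝ)| ≤ (p : ℝ) ^ M := by
  set a := ω.appr M
  have hω : toZModPow M ω = a := rfl
  have ha : (a : ℝ) < (p : ℝ) ^ M := by exact_mod_cast appr_lt ω M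
  by_cases hsmall : 2 * (a : ℝ) ≤ (p : ℝ) ^ M
  · refine ⟨a, ?_, ?_⟩
    · rw [hω, map_intCast, Int.cast_natCast]
    · rwa [Int.cast_natCast, abs_of_nonneg a.cast_nonneg]
  · refine ⟨a - (p : ℤ) ^ M, ?_, ?_⟩
    · rw [hω, map_intCast]
      push_cast
      rw [← Nat.cast_pow, ZMod.natCast_self, sub_zero]
    · push_cast
      rw [abs_of_neg (by linarith)]
      linarith

lemma exists_intCast_toZModPow_eq_norm_padicChar_sub_one_le (ω : ℤ_[p]) (M : ℕ) :
    ∃ q : ℤ, toZModPow M (q : ℤ_[p]) = toZModPow M ω ∧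
      ∀ m, M < m → ‖padicChar p m q - 1‖ ≤ ‖padicChar p M ω - 1‖ := by
  obtain ⟨q, hq, habs⟩ := exists_intCast_toZModPow_eq_two_mul_abs_le ω M
  refine ⟨q, hq, fun m hm => ?_⟩
  have hp : (2 : ℝ) ≤ p := by exact_mod_cast (Fact.out : p.Prime).two_le
  have hpM : (0 : ℝ) < (p : ℝ) ^ M := by positivity
  have hjordan : 4 * (|(q : ℝ)| / p ^ M) ≤ ‖padicChar p M ω - 1‖ := by
    have hhalf : |(q / p ^ M : ℝ)| ≤ 1 / 2 := by
      rw [abs_div, abs_of_pos hpM, div_le_iff₀ hpM]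
      linarith
    have := four_mul_abs_le_norm_exp_two_pi_I_mul_sub_one hhalf
    rwa [← padicChar_intCast, padicChar_eq_of_toZModPow_eq hq, abs_div, abs_of_pos hpM] at this
  have hpm : 2 * (p : ℝ) ^ M ≤ (p : ℝ) ^ m :=
    calc 2 * (p : ℝ) ^ M ≤ p * p ^ M := by gcongr
      _ = p ^ (M + 1) := by ring
      _ ≤ p ^ m := pow_le_pow_right₀ (by linarith) hm
  calc ‖padicChar p m q - 1‖ ≤ 2 * Real.pi * |(q / p ^ m : ℝ)| := by
        rw [padicChar_intCast]
        exact norm_exp_two_pi_I_mul_sub_one_le _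
    _ = 2 * Real.pi * |(q : ℝ)| / p ^ m := by
        rw [abs_div, abs_of_pos (by positivity : (0 : ℝ) < p ^ m), mul_div_assoc]
    _ ≤ 2 * Real.pi * |(q : ℝ)| / (2 * p ^ M) := by gcongr
    _ = Real.pi / 4 * (4 * (|(q : ℝ)| / p ^ M)) := by field_simp
    _ ≤ 1 * ‖padicChar p M ω - 1‖ := by
        gcongr
        linarith [Real.pi_le_four]
    _ = ‖padicChar p M ω - 1‖ := one_mul _

lemma iSup_norm_padicChar_sub_le {n : ℕ → ℕ} (hn : StrictMono n) {x y : ℤ_[p]} {K : ℕ} {η : ℝ}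
    (hxy : toZModPow (n K + 1) x = toZModPow (n K + 1) y)
    (hx : ∀ k > K, ‖padicChar p (n k + 1) x - 1‖ ≤ η)
    (hy : ∀ k > K, ‖padicChar p (n k + 1) y - 1‖ ≤ η) :
    ⨆ k, ‖padicChar p (n k + 1) x - padicChar p (n k + 1) y‖ ≤ 2 * η := by
  have hη : 0 ≤ η := (norm_nonneg _).trans (hx (K + 1) K.lt_succ_self)
  refine ciSup_le fun k => ?_
  rcases le_or_gt k K with hk | hk
  · have hle : n k + 1 ≤ n K + 1 := Nat.succ_le_succ (hn.monotone hk)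
    rw [padicChar_eq_of_toZModPow_eq (toZModPow_eq_of_le hxy hle), sub_self, norm_zero]
    positivity
  · calc ‖padicChar p (n k + 1) x - padicChar p (n k + 1) y‖
        ≤ ‖padicChar p (n k + 1) x - 1‖ + ‖1 - padicChar p (n k + 1) y‖ :=
          norm_sub_le_norm_sub_add_norm_sub _ _ _
      _ ≤ η + η := by
          rw [norm_sub_rev 1]
          exact add_le_add (hx k hk) (hy k hk)
      _ = 2 * η := by ring

end Characters

theorem zmultiples_one_dense_in_Gu_general
    (p : ℕ) [Fact p.Prime] (n : ℕ → ℕ) (hmono : StrictMono n) :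
    ∀ ω ∈ sU p n, ∀ ε > (0 : ℝ), ∃ q : ℤ, padicRho p n ω (q • (1 : ℤ_[p])) < ε := by
  intro ω hω ε hε
  obtain ⟨K₀, hK₀⟩ := Metric.tendsto_atTop.mp hω (ε / 8) (by positivity)
  obtain ⟨K₁, hK₁⟩ := exists_pow_lt_of_lt_one (half_pos hε) (by norm_num : (2 : ℝ)⁻¹ < 1)
  set K := max K₀ K₁
  have hω_near : ∀ k ≥ K, ‖padicChar p (n k + 1) ω - 1‖ ≤ ε / 8 := fun k hk =>
    (dist_eq_norm (padicChar p (n k + 1) ω) 1 ▸ hK₀ k (le_of_max_le_left hk)).le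
  obtain ⟨q, hqω, hq⟩ := exists_intCast_toZModPow_eq_norm_padicChar_sub_one_le ω (n K + 1)
  refine ⟨q, ?_⟩
  rw [zsmul_one]
  have hdist : padicStdDist p ω q < ε / 2 :=
    calc padicStdDist p ω q ≤ 2⁻¹ ^ (n K + 1) := padicStdDist_le_of_toZModPow_eq hqω.symm
      _ ≤ 2⁻¹ ^ K₁ := pow_le_pow_of_le_one (by norm_num) (by norm_num)
          (by have := hmono.le_apply (x := K); omega)
      _ < ε / 2 := hK₁
  have hsup := iSup_norm_padicChar_sub_le hmono hqω.symm (fun k hk => hω_near k hk.le)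
    fun k hk => (hq _ (Nat.succ_lt_succ (hmono hk))).trans (hω_near K le_rfl)
  rw [padicRho]
  linarith

/-- Let `p` be a prime and `(n_k)` strictly increasing with `n_{k+1} - n_k → ∞`. The cyclic
subgroup generated by `ω₀ = 1` (digits `(1,0,0,…)`) is dense in `G_u = (s_u(Δ_p), ρ)`;
in particular `G_u` is monothetic. -/
theorem zmultiples_one_dense_in_Gu
    (p : ℕ) [Fact p.Prime] (n : ℕ → ℕ) (hmono : StrictMono n)
    (hdiff : Tendsto (fun k => n (k + 1) - n k) atTop atTop) :
    ∀ ω ∈ sU p n, ∀ ε > (0 : ℝ), ∃ q : ℤ, padicRho p n ω (q • (1 : ℤ_[p])) < ε :=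
  zmultiples_one_dense_in_Gu_general p n hmono
end

section
/- Let p be a prime, (n_k) a strictly increasing sequence of nonnegative integers with n_{k+1} − n_k → ∞, u_k the character of Δ_p given by u_k(ω) = exp(2πi (a_0 + a_1 p + … + a_{n_k} p^{n_k}) / p^{n_k+1}), and let G_u = s_u(Δ_p) = {ω ∈ Δ_p : u_k(ω) → 1} be equipped with the metric ρ(x, y) = d(x, y) + sup_k |u_k(x) − u_k(y)|. Then every continuous character of (G_u, ρ) is the restriction to G_u of the character of Δ_p determined by an element α of ℤ(p^∞); that is, the character group of G_u is algebraically isomorphic to ℤ(p^∞), the isomorphism sending α ∈ ℤ(p^∞) ⊂ ℚ/ℤ to the character ω ↦ exp(2πi α ω) (evaluation of the p-adic integer ω at α). -/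
open Filter Topology

/-!
On the naturals, which lie in `s_u(Δ_p)`, a character is `N ↦ 𝐞 (N θ)` with `𝐞 x = exp (2πix)`.
Continuity at `0` yields `δ`; take `s` with `4π / p^s` small and `K₀` beyond which the gaps
`n_{k+1} - n_k` exceed `s`. Every `M = Σ_{K₀ ≤ k < K} c_k p^(n_k+1)` with
`c_k ≤ C_k = p^(n_{k+1} - n_k - s)` has small base-`p` tails at every level `n_j + 1`, so it is
`ρ`-close to `0` and `Mθ` lies within `1/16` of an integer. For the signed distances `r_k` of
`p^(n_k+1) θ` to `ℤ` this forces `Σ C_k |r_k| ≤ 1/8`, hence `C_k |r_k| → 0`. Once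
`C_k p^s |r_k| < 1/2`, the identity `p^(n_{k+1}+1) θ = C_k p^s · p^(n_k+1) θ` gives
`r_{k+1} = C_k p^s r_k`, so `|r_k|` is eventually nondecreasing while tending to `0`: some
`p^m θ` is an integer, and `χ 1` is a `p^m`-th root of unity. Finally the truncations
`ω.appr (n_j + 1)` of `ω ∈ s_u(Δ_p)` tend to `ω` for `ρ`, because the gaps tend to infinity,
and continuity identifies `χ ω`.
-/

open Finset Real
open scoped FourierTransform

theorem le_of_abs_sub_round_le {x η : ℝ} (hx₀ : 0 ≤ x) (hx : x < 1 / 2)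
    (h : |x - round x| ≤ η) : x ≤ η := by
  rwa [round_eq_zero_iff.mpr ⟨by linarith, hx⟩, Int.cast_zero, sub_zero, abs_of_nonneg hx₀] at h

-- Raising the coefficients one unit at a time, the sum starts at `0` and moves by steps `≤ η`;
-- a sum in `[0, 2η] ⊆ [0, 1/2)` that is `η`-close to an integer is at most `η`.
theorem sum_mul_le_of_abs_sub_round_le {ι : Type*} [DecidableEq ι] {η : ℝ} (hη : η < 1 / 4)
    (s : Finset ι) (a : ι → ℝ) (C : ι → ℕ) (ha : ∀ i ∈ s, 0 ≤ a i ∧ a i ≤ η)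
    (hnear : ∀ c : ι → ℕ, (∀ i ∈ s, c i ≤ C i) →
      |∑ i ∈ s, c i * a i - round (∑ i ∈ s, c i * a i)| ≤ η) :
    ∑ i ∈ s, C i * a i ≤ η := by
  induction s using Finset.induction_on with
  | empty => simpa using hnear 0 (by simp)
  | insert j s hj ih =>
    have hupdate : ∀ (c : ι → ℕ) (m : ℕ), ∑ i ∈ insert j s, (Function.update c j m i : ℝ) * a i
        = m * a j + ∑ i ∈ s, c i * a i := by
      intro c m
      rw [sum_insert hj, Function.update_self]
      congr 1
      exact sum_congr rfl fun i hi => by rw [Function.update_of_ne (ne_of_mem_of_not_mem hi hj)]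
    have hle : ∀ (c : ι → ℕ) (m : ℕ), (∀ i ∈ s, c i ≤ C i) → m ≤ C j →
        ∀ i ∈ insert j s, Function.update c j m i ≤ C i := by
      intro c m hc hm i hi
      rcases eq_or_ne i j with rfl | hij
      · rwa [Function.update_self]
      · rw [Function.update_of_ne hij]
        exact hc i ((mem_insert.1 hi).resolve_left hij)
    have hs : ∑ i ∈ s, C i * a i ≤ η :=
      ih (fun i hi => ha i (mem_insert_of_mem hi)) fun c hc => by
        simpa [hupdate] using hnear _ (hle c 0 hc (Nat.zero_le _))
    have ha₀ : 0 ≤ ∑ i ∈ s, (C i : ℝ) * a i :=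
      sum_nonneg fun i hi => mul_nonneg (Nat.cast_nonneg _) (ha i (mem_insert_of_mem hi)).1
    obtain ⟨haj₀, hajη⟩ := ha j (mem_insert_self j s)
    have hstep : ∀ m ≤ C j, m * a j + ∑ i ∈ s, C i * a i ≤ η := by
      intro m hm
      induction m with
      | zero => simpa using hs
      | succ m ihm =>
        have hprev := ihm (by omega)
        refine le_of_abs_sub_round_le (by positivity) (by push_cast; linarith) ?_
        simpa [hupdate] using hnear _ (hle C (m + 1) (fun i _ => le_rfl) hm)
    rw [sum_insert hj]
    exact hstep (C j) le_rfl

theorem abs_sub_round_sum_mul_abs_sub_round_le {ι : Type*} {η : ℝ} (s : Finset ι)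
    (β : ι → ℝ) (c : ι → ℕ)
    (hnear : ∀ c' : ι → ℕ, (∀ i ∈ s, c' i ≤ c i) →
      |∑ i ∈ s, c' i * β i - round (∑ i ∈ s, c' i * β i)| ≤ η) :
    |∑ i ∈ s, c i * |β i - round (β i)| - round (∑ i ∈ s, c i * |β i - round (β i)|)|
      ≤ 2 * η := by
  classical
  set cpos : ι → ℕ := fun i => if 0 ≤ β i - round (β i) then c i else 0
  set cneg : ι → ℕ := fun i => if 0 ≤ β i - round (β i) then 0 else c i
  set X := ∑ i ∈ s, (cpos i : ℝ) * β i
  set Y := ∑ i ∈ s, (cneg i : ℝ) * β i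
  set Z : ℤ := ∑ i ∈ s, ((cpos i : ℤ) - cneg i) * round (β i)
  have hsplit : ∑ i ∈ s, (c i : ℝ) * |β i - round (β i)| = X - Y - Z := by
    simp only [X, Y, Z, Int.cast_sum, Int.cast_mul, Int.cast_sub, Int.cast_natCast,
      ← sum_sub_distrib]
    refine sum_congr rfl fun i _ => ?_
    simp only [cpos, cneg]
    split_ifs with h
    · rw [abs_of_nonneg h]; push_cast; ring
    · rw [abs_of_neg (not_le.1 h)]; push_cast; ring
  have hX := hnear cpos fun i _ => by simp only [cpos]; split_ifs <;> simp
  have hY := hnear cneg fun i _ => by simp only [cneg]; split_ifs <;> simp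
  calc _ ≤ |∑ i ∈ s, (c i : ℝ) * |β i - round (β i)| - ((round X - round Y - Z : ℤ) : ℝ)| :=
        round_le _ _
    _ = |(X - round X) - (Y - round Y)| := by rw [hsplit]; push_cast; ring_nf
    _ ≤ |X - round X| + |Y - round Y| := abs_sub _ _
    _ ≤ 2 * η := by linarith

theorem mul_sub_round_mul_eq {x : ℝ} {L : ℤ} (h : |L * (x - round x)| < 1 / 2) :
    L * x - round (L * x) = L * (x - round x) := by
  have h₀ : round ((L : ℝ) * (x - round x)) = 0 :=
    round_eq_zero_iff.mpr ⟨by linarith [(abs_lt.mp h).1], (abs_lt.mp h).2⟩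
  have hx : (L : ℝ) * x = L * (x - round x) + ((L * round x : ℤ) : ℝ) := by push_cast; ring
  rw [hx, round_add_intCast, h₀]
  push_cast
  ring

theorem tendsto_mul_abs_sub_round_of_abs_sub_round_sum_le (β : ℕ → ℝ) (C : ℕ → ℕ) (K₀ : ℕ)
    (hC : ∀ k ≥ K₀, 0 < C k)
    (hnear : ∀ K (c : ℕ → ℕ), (∀ k ∈ Ico K₀ K, c k ≤ C k) →
      |∑ k ∈ Ico K₀ K, c k * β k - round (∑ k ∈ Ico K₀ K, c k * β k)| ≤ 1 / 16) :
    Tendsto (fun k => (C k : ℝ) * |β k - round (β k)|) atTop (𝓝 0) := by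
  classical
  have hsingle : ∀ k ≥ K₀, |β k - round (β k)| ≤ 1 / 16 := fun k hk => by
    simpa [hk] using hnear (k + 1) (fun i => if i = k then 1 else 0) fun i _ => by
      split_ifs with h
      · exact hC i (h ▸ hk)
      · exact Nat.zero_le _
  have hsum : ∀ K, ∑ k ∈ Ico K₀ K, (C k : ℝ) * |β k - round (β k)| ≤ 1 / 8 := fun K =>
    sum_mul_le_of_abs_sub_round_le (by norm_num) _ _ _
      (fun k hk => ⟨abs_nonneg _, (hsingle k (mem_Ico.1 hk).1).trans (by norm_num)⟩)
      fun c hc => (abs_sub_round_sum_mul_abs_sub_round_le _ β c fun c' hc' =>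
        hnear K c' fun k hk => (hc' k hk).trans (hc k hk)).trans (by norm_num)
  rw [← tendsto_add_atTop_iff_nat K₀]
  refine (summable_of_sum_range_le (c := 1 / 8) (fun _ => by positivity) fun K => ?_)
    |>.tendsto_atTop_zero
  simpa [sum_Ico_eq_sum_range, add_comm] using hsum (K₀ + K)

theorem exists_eq_round_of_abs_sub_round_sum_le (β : ℕ → ℝ) (C : ℕ → ℕ) (P K₀ : ℕ)
    (hP : 0 < P) (hC : ∀ k ≥ K₀, 0 < C k) (hβ : ∀ k ≥ K₀, β (k + 1) = (C k * P : ℕ) * β k)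
    (hnear : ∀ K (c : ℕ → ℕ), (∀ k ∈ Ico K₀ K, c k ≤ C k) →
      |∑ k ∈ Ico K₀ K, c k * β k - round (∑ k ∈ Ico K₀ K, c k * β k)| ≤ 1 / 16) :
    ∃ k, β k = round (β k) := by
  have hlim := tendsto_mul_abs_sub_round_of_abs_sub_round_sum_le β C K₀ hC hnear
  set r : ℕ → ℝ := fun k => β k - round (β k)
  obtain ⟨K₁, hK₁⟩ := eventually_atTop.1
    ((hlim.const_mul (P : ℝ)).eventually_lt_const (by norm_num : (P : ℝ) * 0 < 1 / 2))
  set K := max K₀ K₁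
  have hgrow : ∀ k ≥ K, |r k| ≤ |r (k + 1)| := fun k hk => by
    have hk₀ : K₀ ≤ k := le_of_max_le_left hk
    have hL := hK₁ k (le_of_max_le_right hk)
    have hrec : r (k + 1) = ((C k * P : ℕ) : ℤ) * r k := by
      have := mul_sub_round_mul_eq (x := β k) (L := ((C k * P : ℕ) : ℤ))
        (by rw [abs_mul]; push_cast at hL ⊢; rw [abs_of_nonneg (by positivity)]; linarith)
      simp only [r, hβ k hk₀]
      exact_mod_cast this
    have hL₁ : (1 : ℝ) ≤ ((C k * P : ℕ) : ℤ) := by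
      exact_mod_cast Nat.one_le_iff_ne_zero.2 (Nat.mul_ne_zero (hC k hk₀).ne' hP.ne')
    rw [hrec, abs_mul, abs_of_nonneg (zero_le_one.trans hL₁)]
    exact le_mul_of_one_le_left (abs_nonneg _) hL₁
  have hr0 : Tendsto (fun k => |r k|) atTop (𝓝 0) :=
    squeeze_zero' (Eventually.of_forall fun _ => abs_nonneg _)
      (eventually_atTop.2 ⟨K₀, fun k hk => le_mul_of_one_le_left (abs_nonneg _)
        (by exact_mod_cast hC k hk)⟩) hlim
  have hrK : |r K| ≤ 0 := by
    simpa using (monotone_nat_of_le_succ fun i => by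
      simpa [add_right_comm] using hgrow (i + K) (by omega)).ge_of_tendsto
        (hr0.comp (tendsto_add_atTop_nat K)) 0
  exact ⟨K, sub_eq_zero.1 (abs_nonpos_iff.1 hrK)⟩

theorem Real.fourierChar_intCast (A : ℤ) : 𝐞 (A : ℝ) = 1 := by
  rw [fourierChar_apply', Circle.exp_two_pi_mul_int]

theorem Real.fourierChar_sub_round (x : ℝ) : 𝐞 (x - round x) = 𝐞 x := by
  rw [AddChar.map_sub_eq_div, fourierChar_intCast, div_one]

theorem Real.norm_fourierChar_sub_one_le (x : ℝ) : ‖(𝐞 x : ℂ) - 1‖ ≤ 2 * π * |x| := by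
  rw [fourierChar_apply, mul_comm _ Complex.I]
  refine norm_exp_I_mul_ofReal_sub_one_le.trans_eq ?_
  rw [Real.norm_eq_abs, abs_mul, abs_of_pos two_pi_pos]

theorem Real.four_mul_abs_sub_round_le_norm_fourierChar_sub_one (x : ℝ) :
    4 * |x - round x| ≤ ‖(𝐞 x : ℂ) - 1‖ := by
  rw [← fourierChar_sub_round, fourierChar_apply, mul_comm _ Complex.I,
    Complex.norm_exp_I_mul_ofReal_sub_one, Real.norm_eq_abs, abs_mul, abs_two]
  set t := x - round x
  have ht : |π * t| ≤ π / 2 := by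
    rw [abs_mul, abs_of_pos pi_pos]
    nlinarith [abs_sub_round x, pi_pos]
  have := mul_abs_le_abs_sin ht
  rw [abs_mul, abs_of_pos pi_pos] at this
  rw [show 2 * π * t / 2 = π * t by ring]
  have hπ : 2 / π * (π * |t|) = 2 * |t| := by field_simp
  linarith

theorem Complex.exists_fourierChar_eq {z : ℂ} (hz : ‖z‖ = 1) : ∃ θ : ℝ, (𝐞 θ : ℂ) = z := by
  refine ⟨arg z / (2 * π), ?_⟩
  rw [fourierChar_apply', mul_div_cancel₀ _ two_pi_pos.ne']
  simpa [hz] using Complex.norm_mul_exp_arg_mul_I z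

theorem Complex.exists_pow_eq_exp_of_pow_eq_one {z : ℂ} {q : ℕ} (hq : q ≠ 0) (hz : z ^ q = 1) :
    ∃ a : ℕ, ∀ N : ℕ, z ^ N = Complex.exp (2 * π * Complex.I * a * (N % q : ℕ) / q) := by
  have : NeZero q := ⟨hq⟩
  obtain ⟨a, -, rfl⟩ := (Complex.isPrimitiveRoot_exp q hq).eq_pow_of_pow_eq_one hz
  refine ⟨a, fun N => ?_⟩
  rw [pow_eq_pow_mod N hz, ← pow_mul, ← Complex.exp_nat_mul]
  congr 1
  push_cast
  field_simp

namespace PadicInt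

variable {p : ℕ} [Fact p.Prime]

theorem appr_eq_val_toZModPow (x : ℤ_[p]) (m : ℕ) : x.appr m = (toZModPow m x).val :=
  (ZMod.val_cast_of_lt (x.appr_lt m)).symm

theorem appr_natCast (N m : ℕ) : (N : ℤ_[p]).appr m = N % p ^ m := by
  rw [appr_eq_val_toZModPow, map_natCast, ZMod.val_natCast]

theorem appr_eq_appr_of_dvd_sub {x y : ℤ_[p]} {m : ℕ} (h : (p : ℤ_[p]) ^ m ∣ x - y) :
    x.appr m = y.appr m := by
  rw [appr_eq_val_toZModPow, appr_eq_val_toZModPow, (RingHom.sub_mem_ker_iff _).1]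
  rwa [ker_toZModPow, Ideal.mem_span_singleton]

theorem pow_dvd_sub_appr (x : ℤ_[p]) (m : ℕ) : (p : ℤ_[p]) ^ m ∣ x - x.appr m :=
  Ideal.mem_span_singleton.1 (appr_spec m x)

end PadicInt

open PadicInt

section Padic

variable {p : ℕ} [Fact p.Prime]

theorem appr_succ_eq_add_padicDigit_mul (x : ℤ_[p]) (i : ℕ) :
    x.appr (i + 1) = x.appr i + padicDigit p x i * p ^ i := by
  rw [padicDigit, Nat.div_mul_cancel (x.dvd_appr_sub_appr i (i + 1) i.le_succ),
    Nat.add_sub_cancel' (x.appr_mono i.le_succ)]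

theorem eq_of_padicDigit_eq {x y : ℤ_[p]} (h : ∀ i, padicDigit p x i = padicDigit p y i) :
    x = y := by
  have happr : ∀ m, x.appr m = y.appr m := by
    intro m
    induction m with
    | zero => simp [appr]
    | succ i ih => rw [appr_succ_eq_add_padicDigit_mul, appr_succ_eq_add_padicDigit_mul, ih, h]
  refine ext_of_toZModPow.1 fun m => ?_
  rw [← ZMod.natCast_zmod_val (toZModPow m x), ← ZMod.natCast_zmod_val (toZModPow m y),
    ← appr_eq_val_toZModPow, ← appr_eq_val_toZModPow, happr]

theorem padicDigit_eq_of_dvd_sub {x y : ℤ_[p]} {t i : ℕ} (h : (p : ℤ_[p]) ^ t ∣ x - y)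
    (hi : i < t) : padicDigit p x i = padicDigit p y i := by
  rw [padicDigit, padicDigit, appr_eq_appr_of_dvd_sub ((pow_dvd_pow _ hi).trans h),
    appr_eq_appr_of_dvd_sub ((pow_dvd_pow _ hi.le).trans h)]

theorem padicStdDist_le_of_dvd_sub {x y : ℤ_[p]} {t : ℕ} (h : (p : ℤ_[p]) ^ t ∣ x - y) :
    padicStdDist p x y ≤ 2⁻¹ ^ t := by
  unfold padicStdDist
  split_ifs with hxy
  · positivity
  · have hne : {i | padicDigit p x i ≠ padicDigit p y i}.Nonempty := by
      by_contra hempty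
      exact hxy (eq_of_padicDigit_eq fun i => by_contra fun hi => hempty ⟨i, hi⟩)
    exact pow_le_pow_of_le_one (by norm_num) (by norm_num)
      (le_csInf hne fun i hi => not_lt.1 fun hit => hi (padicDigit_eq_of_dvd_sub h hit))

theorem padicChar_eq_fourierChar (m : ℕ) (ω : ℤ_[p]) :
    padicChar p m ω = 𝐞 (ω.appr m / p ^ m) := by
  rw [padicChar, fourierChar_apply]
  congr 1
  push_cast
  ring

theorem padicChar_eq_of_dvd_sub {x y : ℤ_[p]} {m : ℕ} (h : (p : ℤ_[p]) ^ m ∣ x - y) :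
    padicChar p m x = padicChar p m y := by
  rw [padicChar, padicChar, appr_eq_appr_of_dvd_sub h]

theorem norm_padicChar_sub_one_le (m : ℕ) (ω : ℤ_[p]) :
    ‖padicChar p m ω - 1‖ ≤ 2 * π * (ω.appr m / p ^ m) := by
  rw [padicChar_eq_fourierChar]
  exact (norm_fourierChar_sub_one_le _).trans_eq (by rw [abs_of_nonneg (by positivity)])

theorem norm_padicChar_natCast_sub_one_le (m N : ℕ) :
    ‖padicChar p m N - 1‖ ≤ 2 * π * (N / p ^ m) := by
  refine (norm_padicChar_sub_one_le m _).trans ?_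
  rw [appr_natCast]
  gcongr
  exact_mod_cast Nat.mod_le _ _

theorem natCast_mem_sU {n : ℕ → ℕ} (hn : StrictMono n) (N : ℕ) : (N : ℤ_[p]) ∈ sU p n := by
  have hp : (1 : ℝ) < p := by exact_mod_cast (Fact.out : p.Prime).one_lt
  rw [sU, Set.mem_ofPred_eq, tendsto_iff_norm_sub_tendsto_zero]
  refine squeeze_zero (fun _ => norm_nonneg _) (fun k => norm_padicChar_natCast_sub_one_le _ N) ?_
  simpa using ((tendsto_const_nhds (x := (N : ℝ))).div_atTop
    ((tendsto_pow_atTop_atTop_of_one_lt hp).comp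
      ((tendsto_add_atTop_nat 1).comp hn.tendsto_atTop))).const_mul (2 * π)

theorem padicRho_le {n : ℕ → ℕ} {x y : ℤ_[p]} {t : ℕ} {B : ℝ} (h : (p : ℤ_[p]) ^ t ∣ x - y)
    (hB : ∀ k, ‖padicChar p (n k + 1) x - padicChar p (n k + 1) y‖ ≤ B) :
    padicRho p n x y ≤ 2⁻¹ ^ t + B :=
  add_le_add (padicStdDist_le_of_dvd_sub h) (ciSup_le hB)

end Padic

section NatSum

variable {p P K₀ : ℕ} {n : ℕ → ℕ}

theorem mul_sum_lt_two_mul_pow (hp : 2 ≤ p) (hn : StrictMono n) (c : ℕ → ℕ) (K : ℕ)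
    (hc : ∀ k ∈ Ico K₀ K, P * (c k * p ^ (n k + 1)) ≤ p ^ (n (k + 1) + 1)) :
    P * ∑ k ∈ Ico K₀ K, c k * p ^ (n k + 1) < 2 * p ^ (n K + 1) := by
  induction K with
  | zero => simp; positivity
  | succ K ih =>
    rcases lt_or_ge K K₀ with hK | hK
    · rw [Ico_eq_empty_of_le (by omega)]; simp; positivity
    have hprev := ih fun k hk => hc k (by simp only [mem_Ico] at hk ⊢; omega)
    have hlast := hc K (by simp only [mem_Ico]; omega)
    have hdouble : 2 * p ^ (n K + 1) ≤ p ^ (n (K + 1) + 1) :=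
      calc 2 * p ^ (n K + 1) ≤ p ^ (n K + 1 + 1) :=
            (Nat.mul_le_mul_right _ hp).trans_eq (pow_succ' p _).symm
        _ ≤ p ^ (n (K + 1) + 1) := Nat.pow_le_pow_right (by omega) (by
            have : n K < n (K + 1) := hn (by omega)
            omega)
    rw [sum_Ico_succ_top hK, mul_add]
    omega

theorem mul_sum_mod_pow_lt (hp : 2 ≤ p) (hn : StrictMono n) (c : ℕ → ℕ) (K : ℕ)
    (hc : ∀ k ∈ Ico K₀ K, P * (c k * p ^ (n k + 1)) ≤ p ^ (n (k + 1) + 1)) (j : ℕ) :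
    P * ((∑ k ∈ Ico K₀ K, c k * p ^ (n k + 1)) % p ^ (n j + 1)) < 2 * p ^ (n j + 1) := by
  induction K with
  | zero => simp; positivity
  | succ K ih =>
    rcases lt_or_ge K K₀ with hK | hK
    · rw [Ico_eq_empty_of_le (by omega)]; simp; positivity
    rcases le_or_gt j K with hj | hj
    · obtain ⟨d, hd⟩ := pow_dvd_pow p (Nat.succ_le_succ (hn.monotone hj))
      rw [sum_Ico_succ_top hK, hd, mul_left_comm, Nat.add_mul_mod_self_left]
      exact ih fun k hk => hc k (by simp only [mem_Ico] at hk ⊢; omega)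
    · calc _ ≤ P * ∑ k ∈ Ico K₀ (K + 1), c k * p ^ (n k + 1) := by gcongr; exact Nat.mod_le _ _
        _ < 2 * p ^ (n (K + 1) + 1) := mul_sum_lt_two_mul_pow hp hn c (K + 1) hc
        _ ≤ 2 * p ^ (n j + 1) := by
          gcongr
          · omega
          · exact hn.monotone hj

end NatSum

section Rho

variable {p : ℕ} [Fact p.Prime] {n : ℕ → ℕ}

theorem padicChar_zero (m : ℕ) : padicChar p m 0 = 1 := by
  have h := appr_natCast (p := p) 0 m
  simp only [Nat.cast_zero, Nat.zero_mod] at h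
  simp [padicChar, h]

theorem padicRho_zero_natCast_sum_le (hn : StrictMono n) {s K₀ K : ℕ} (c : ℕ → ℕ)
    (hc : ∀ k ∈ Ico K₀ K, p ^ s * (c k * p ^ (n k + 1)) ≤ p ^ (n (k + 1) + 1)) :
    padicRho p n 0 ((∑ k ∈ Ico K₀ K, c k * p ^ (n k + 1) : ℕ) : ℤ_[p])
      ≤ 2⁻¹ ^ (n K₀ + 1) + 4 * π / p ^ s := by
  have hp := (Fact.out : p.Prime).two_le
  set M := ∑ k ∈ Ico K₀ K, c k * p ^ (n k + 1)
  have hdvd : p ^ (n K₀ + 1) ∣ M := dvd_sum fun k hk => dvd_mul_of_dvd_right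
    (pow_dvd_pow p (Nat.succ_le_succ (hn.monotone (mem_Ico.1 hk).1))) _
  refine padicRho_le (by rw [zero_sub, dvd_neg]; exact_mod_cast Nat.cast_dvd_cast hdvd)
    fun j => ?_
  have hmod : (p : ℝ) ^ s * (M % p ^ (n j + 1) : ℕ) ≤ 2 * p ^ (n j + 1) := by
    exact_mod_cast (mul_sum_mod_pow_lt hp hn c K hc j).le
  calc ‖padicChar p (n j + 1) 0 - padicChar p (n j + 1) M‖
      = ‖padicChar p (n j + 1) M - 1‖ := by rw [padicChar_zero, norm_sub_rev]
    _ ≤ 2 * π * ((M % p ^ (n j + 1) : ℕ) / p ^ (n j + 1)) := by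
      simpa [appr_natCast] using norm_padicChar_sub_one_le (n j + 1) (M : ℤ_[p])
    _ ≤ 4 * π / p ^ s := by
      rw [mul_div_assoc', div_le_div_iff₀ (by positivity) (by positivity)]
      nlinarith [pi_pos]

theorem norm_padicChar_sub_padicChar_appr_le (hn : StrictMono n) (ω : ℤ_[p]) {j k : ℕ}
    (hjk : j < k) :
    ‖padicChar p (n k + 1) ω - padicChar p (n k + 1) (ω.appr (n j + 1))‖
      ≤ ‖padicChar p (n k + 1) ω - 1‖ + 2 * π / p ^ (n (j + 1) - n j) := by
  have hp₀ : 0 < p := (Fact.out : p.Prime).pos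
  set N := ω.appr (n j + 1)
  have hN : N * p ^ (n (j + 1) - n j) ≤ p ^ (n k + 1) :=
    calc N * p ^ (n (j + 1) - n j) ≤ p ^ (n j + 1) * p ^ (n (j + 1) - n j) := by
          gcongr; exact (appr_lt ω _).le
      _ = p ^ (n (j + 1) + 1) := by
          rw [← pow_add]; have : n j < n (j + 1) := hn (by omega); congr 1; omega
      _ ≤ p ^ (n k + 1) := Nat.pow_le_pow_right hp₀ (Nat.succ_le_succ (hn.monotone hjk))
  have hNR : (N : ℝ) / p ^ (n k + 1) ≤ 1 / p ^ (n (j + 1) - n j) := by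
    rw [div_le_div_iff₀ (by positivity) (by positivity), one_mul]
    exact_mod_cast hN
  calc _ ≤ ‖padicChar p (n k + 1) ω - 1‖ + ‖padicChar p (n k + 1) N - 1‖ := by
        rw [norm_sub_rev (padicChar p (n k + 1) N)]; exact norm_sub_le_norm_sub_add_norm_sub _ _ _
    _ ≤ ‖padicChar p (n k + 1) ω - 1‖ + 2 * π * (1 / p ^ (n (j + 1) - n j)) := by
        gcongr; exact (norm_padicChar_natCast_sub_one_le _ N).trans (by gcongr)
    _ = _ := by rw [← mul_div_assoc, mul_one]

theorem eventually_padicRho_appr_lt (hn : StrictMono n)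
    (hgap : Tendsto (fun k => n (k + 1) - n k) atTop atTop) {ω : ℤ_[p]} (hω : ω ∈ sU p n)
    {ε : ℝ} (hε : 0 < ε) : ∀ᶠ j in atTop, padicRho p n ω (ω.appr (n j + 1)) < ε := by
  have hp₁ : (1 : ℝ) < p := by exact_mod_cast (Fact.out : p.Prime).one_lt
  have hdist : ∀ᶠ j in atTop, (2⁻¹ : ℝ) ^ (n j + 1) < ε / 4 :=
    ((tendsto_pow_atTop_nhds_zero_of_lt_one (by norm_num) (by norm_num)).comp
      ((tendsto_add_atTop_nat 1).comp hn.tendsto_atTop)).eventually_lt_const (by positivity)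
  have hgapε : ∀ᶠ j in atTop, 2 * π / (p : ℝ) ^ (n (j + 1) - n j) < ε / 4 :=
    (tendsto_const_nhds.div_atTop ((tendsto_pow_atTop_atTop_of_one_lt hp₁).comp hgap))
      |>.eventually_lt_const (by positivity)
  obtain ⟨J, hJ⟩ := eventually_atTop.1 <|
    (tendsto_iff_norm_sub_tendsto_zero.1 hω).eventually_lt_const (by positivity : 0 < ε / 4)
  filter_upwards [hdist, hgapε, eventually_ge_atTop J] with j hdj hgj hJj
  refine (padicRho_le (B := ε / 2) (pow_dvd_sub_appr ω (n j + 1)) fun k => ?_).trans_lt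
    (by linarith)
  rcases le_or_gt k j with hkj | hkj
  · rw [padicChar_eq_of_dvd_sub ((pow_dvd_pow _ (Nat.succ_le_succ (hn.monotone hkj))).trans
      (pow_dvd_sub_appr ω (n j + 1))), sub_self, norm_zero]
    positivity
  · linarith [norm_padicChar_sub_padicChar_appr_le hn ω hkj, hJ k (by omega)]

end Rho

section Character

variable {G : Type*} [AddMonoidWithOne G] {S : Set G} {χ : G → ℂ}

theorem map_zero_eq_one_of_mem (h0 : (0 : G) ∈ S) (hnorm : ∀ x ∈ S, ‖χ x‖ = 1)
    (hhom : ∀ x ∈ S, ∀ y ∈ S, χ (x + y) = χ x * χ y) : χ 0 = 1 := by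
  have hne : χ 0 ≠ 0 := fun h => by simpa [h] using hnorm 0 h0
  have hsq := hhom 0 h0 0 h0
  rw [add_zero] at hsq
  exact mul_left_cancel₀ hne (hsq.symm.trans (mul_one _).symm)

theorem map_natCast_eq_pow (hS : ∀ N : ℕ, (N : G) ∈ S) (hnorm : ∀ x ∈ S, ‖χ x‖ = 1)
    (hhom : ∀ x ∈ S, ∀ y ∈ S, χ (x + y) = χ x * χ y) (N : ℕ) : χ N = χ 1 ^ N := by
  induction N with
  | zero => simpa using map_zero_eq_one_of_mem (by simpa using hS 0) hnorm hhom
  | succ N ih => rw [Nat.cast_succ, hhom _ (hS N) _ (by simpa using hS 1), ih, pow_succ]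

theorem exists_map_natCast_eq_fourierChar (hS : ∀ N : ℕ, (N : G) ∈ S)
    (hnorm : ∀ x ∈ S, ‖χ x‖ = 1) (hhom : ∀ x ∈ S, ∀ y ∈ S, χ (x + y) = χ x * χ y) :
    ∃ θ : ℝ, ∀ N : ℕ, χ N = 𝐞 (N * θ) := by
  obtain ⟨θ, hθ⟩ := Complex.exists_fourierChar_eq (hnorm 1 (by simpa using hS 1))
  refine ⟨θ, fun N => ?_⟩
  rw [map_natCast_eq_pow hS hnorm hhom, ← hθ, ← nsmul_eq_mul, AddChar.map_nsmul_eq_pow]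
  simp

end Character

section Main

variable {p : ℕ} [Fact p.Prime] {n : ℕ → ℕ}

theorem abs_sub_round_sum_mul_pow_mul_le (hn : StrictMono n) {χ : ℤ_[p] → ℂ} {θ : ℝ}
    (hθ : ∀ N : ℕ, χ N = 𝐞 (N * θ)) {δ : ℝ}
    (hδχ : ∀ y ∈ sU p n, padicRho p n 0 y < δ → ‖χ y - χ 0‖ < 1 / 4) {s K₀ K : ℕ}
    (hδ : (2⁻¹ : ℝ) ^ (n K₀ + 1) + 4 * π / p ^ s < δ) (c : ℕ → ℕ)
    (hc : ∀ k ∈ Ico K₀ K, p ^ s * (c k * p ^ (n k + 1)) ≤ p ^ (n (k + 1) + 1)) :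
    |∑ k ∈ Ico K₀ K, c k * ((p : ℝ) ^ (n k + 1) * θ)
      - round (∑ k ∈ Ico K₀ K, c k * ((p : ℝ) ^ (n k + 1) * θ))| ≤ 1 / 16 := by
  set M := ∑ k ∈ Ico K₀ K, c k * p ^ (n k + 1)
  have hχM := hδχ M (natCast_mem_sU hn M) ((padicRho_zero_natCast_sum_le hn c hc).trans_lt hδ)
  rw [hθ, show χ 0 = 1 by simpa using hθ 0] at hχM
  have hM : ∑ k ∈ Ico K₀ K, (c k : ℝ) * ((p : ℝ) ^ (n k + 1) * θ) = M * θ := by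
    simp only [M, Nat.cast_sum, Nat.cast_mul, Nat.cast_pow, sum_mul, mul_assoc]
  rw [hM]
  linarith [four_mul_abs_sub_round_le_norm_fourierChar_sub_one ((M : ℝ) * θ)]

theorem exists_pow_mul_eq_intCast (hn : StrictMono n)
    (hgap : Tendsto (fun k => n (k + 1) - n k) atTop atTop) {χ : ℤ_[p] → ℂ} {θ : ℝ}
    (hθ : ∀ N : ℕ, χ N = 𝐞 (N * θ))
    (hχ : ∃ δ > (0 : ℝ), ∀ y ∈ sU p n, padicRho p n 0 y < δ → ‖χ y - χ 0‖ < 1 / 4) :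
    ∃ m, ∃ A : ℤ, (p : ℝ) ^ m * θ = A := by
  obtain ⟨δ, hδ, hδχ⟩ := hχ
  have hp₀ : 0 < p := (Fact.out : p.Prime).pos
  have hp₁ : (1 : ℝ) < p := by exact_mod_cast (Fact.out : p.Prime).one_lt
  obtain ⟨s, hs⟩ : ∃ s : ℕ, 4 * π / (p : ℝ) ^ s < δ / 2 :=
    ((tendsto_const_nhds.div_atTop (tendsto_pow_atTop_atTop_of_one_lt hp₁)).eventually_lt_const
      (half_pos hδ)).exists
  obtain ⟨K₀, hK₀⟩ := eventually_atTop.1 <|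
    (((tendsto_pow_atTop_nhds_zero_of_lt_one (r := (2⁻¹ : ℝ)) (by norm_num) (by norm_num)).comp
      ((tendsto_add_atTop_nat 1).comp hn.tendsto_atTop)).eventually_lt_const (half_pos hδ)).and
      (hgap.eventually_ge_atTop s)
  have hK₀δ : (2⁻¹ : ℝ) ^ (n K₀ + 1) + 4 * π / p ^ s < δ := by
    linarith [show (2⁻¹ : ℝ) ^ (n K₀ + 1) < δ / 2 from (hK₀ K₀ le_rfl).1]
  set C : ℕ → ℕ := fun k => p ^ (n (k + 1) - n k - s)
  have hC : ∀ k ≥ K₀, C k * p ^ s * p ^ (n k + 1) = p ^ (n (k + 1) + 1) := fun k hk => by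
    have := (hK₀ k hk).2
    have : n k < n (k + 1) := hn (by omega)
    simp only [C, ← pow_add]
    congr 1
    omega
  obtain ⟨k, hk⟩ := exists_eq_round_of_abs_sub_round_sum_le (fun k => (p : ℝ) ^ (n k + 1) * θ) C
    (p ^ s) K₀ (pow_pos hp₀ _) (fun k _ => pow_pos hp₀ _)
    (fun k hk => by
      have h := congrArg (Nat.cast : ℕ → ℝ) (hC k hk)
      push_cast at h ⊢
      rw [← h]
      ring)
    fun K c hc => abs_sub_round_sum_mul_pow_mul_le hn hθ hδχ hK₀δ c fun k hk =>
      calc p ^ s * (c k * p ^ (n k + 1)) ≤ p ^ s * (C k * p ^ (n k + 1)) := by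
            gcongr; exact hc k hk
        _ = p ^ (n (k + 1) + 1) := by rw [← hC k (mem_Ico.1 hk).1]; ring
  exact ⟨n k + 1, _, hk⟩

theorem eq_of_eventually_padicRho_lt {χ : ℤ_[p] → ℂ} {x : ℤ_[p]}
    (hcont : ∀ ε > (0 : ℝ), ∃ δ > (0 : ℝ), ∀ y ∈ sU p n, padicRho p n x y < δ → ‖χ y - χ x‖ < ε)
    {y : ℕ → ℤ_[p]} (hy : ∀ j, y j ∈ sU p n)
    (hρ : ∀ δ > (0 : ℝ), ∀ᶠ j in atTop, padicRho p n x (y j) < δ) {c : ℂ}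
    (hc : ∀ᶠ j in atTop, χ (y j) = c) : χ x = c := by
  by_contra hne
  obtain ⟨δ, hδ, hδx⟩ := hcont _ (norm_pos_iff.2 (sub_ne_zero.2 (Ne.symm hne)))
  obtain ⟨j, hjρ, hjc⟩ := ((hρ δ hδ).and hc).exists
  exact (hjc ▸ hδx (y j) (hy j) hjρ).false

end Main

/-- Every continuous character `χ` of `G_u = (s_u(Δ_p), ρ)` (a circle-valued homomorphism on
`s_u(Δ_p)`, continuous for the metric `ρ`) is the restriction to `G_u` of the character of
`Δ_p` determined by an element `α = a/p^m` of `ℤ(p^∞)`, i.e.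
`χ(ω) = exp(2πi a ω.appr m / p^m)` for all `ω ∈ s_u(Δ_p)`. Hence the character group of
`G_u` is algebraically isomorphic to `ℤ(p^∞)`. -/
theorem character_of_Gu_eq_prufer_eval
    (p : ℕ) [Fact p.Prime] (n : ℕ → ℕ) (hmono : StrictMono n)
    (hdiff : Tendsto (fun k => n (k + 1) - n k) atTop atTop)
    (χ : ℤ_[p] → ℂ)
    (hnorm : ∀ ω ∈ sU p n, ‖χ ω‖ = 1)
    (hhom : ∀ x ∈ sU p n, ∀ y ∈ sU p n, χ (x + y) = χ x * χ y)
    (hcont : ∀ x ∈ sU p n, ∀ ε > (0 : ℝ), ∃ δ > (0 : ℝ), ∀ y ∈ sU p n,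
      padicRho p n x y < δ → ‖χ y - χ x‖ < ε) :
    ∃ m a : ℕ, ∀ ω ∈ sU p n,
      χ ω = Complex.exp (2 * Real.pi * Complex.I * (a : ℂ) * (ω.appr m : ℂ) / (p : ℂ) ^ m) := by
  have hmem : ∀ N : ℕ, (N : ℤ_[p]) ∈ sU p n := natCast_mem_sU hmono
  obtain ⟨θ, hθ⟩ := exists_map_natCast_eq_fourierChar hmem hnorm hhom
  obtain ⟨m, A, hA⟩ := exists_pow_mul_eq_intCast hmono hdiff hθ
    (hcont 0 (by simpa using hmem 0) (1 / 4) (by norm_num))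
  have hpow : χ 1 ^ p ^ m = 1 := by
    rw [← map_natCast_eq_pow hmem hnorm hhom, hθ, Nat.cast_pow, hA, fourierChar_intCast,
      Circle.coe_one]
  obtain ⟨a, ha⟩ :=
    Complex.exists_pow_eq_exp_of_pow_eq_one (pow_ne_zero m (Fact.out : p.Prime).ne_zero) hpow
  have hlarge : ∀ᶠ j in atTop, m ≤ n j + 1 :=
    ((tendsto_add_atTop_nat 1).comp hmono.tendsto_atTop).eventually_ge_atTop m
  refine ⟨m, a, fun ω hω => eq_of_eventually_padicRho_lt (hcont ω hω) (fun j => hmem _)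
    (fun δ hδ => eventually_padicRho_appr_lt hmono hdiff hω hδ) ?_⟩
  filter_upwards [hlarge] with j hj
  rw [map_natCast_eq_pow hmem hnorm hhom, ha, ← appr_natCast, appr_eq_appr_of_dvd_sub
    (dvd_sub_comm.1 ((pow_dvd_pow _ hj).trans (pow_dvd_sub_appr ω _))), Nat.cast_pow]
end
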